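/- Let R be a commutative ring with 4 ≤ γ_t(Γ(R)) < ∞. Then γ(Γ(R)) = γ_t(Γ(R)). -/

import Mathlib

/-- Vertices of the zero-divisor graph: nonzero zero-divisors. -/
def zdVerts (R : Type*) [CommRing R] : Set R :=
  {x | x ≠ 0 ∧ ∃ y ≠ 0, x * y = 0}

/-- The set of all zero-divisors (including 0 when R is nontrivial). -/
def zdSet (R : Type*) [CommRing R] : Set R :=
  {x | ∃ y ≠ 0, x * y = 0}

/-- A dominating set of the zero-divisor graph Γ(R) (loops allowed: `x` is
adjacent to itself iff `x^2 = 0`). -/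
def IsDomSet (R : Type*) [CommRing R] (X : Set R) : Prop :=
  X ⊆ zdVerts R ∧ ∀ v ∈ zdVerts R, v ∉ X → ∃ x ∈ X, x * v = 0

/-- A total dominating set of Γ(R): every vertex has a neighbor in `X`
(possibly itself, if looped). -/
def IsTotDomSet (R : Type*) [CommRing R] (X : Set R) : Prop :=
  X ⊆ zdVerts R ∧ ∀ v ∈ zdVerts R, ∃ x ∈ X, x * v = 0

/-- The domination number γ(Γ(R)), as a cardinal. -/
noncomputable def domNum (R : Type*) [CommRing R] : Cardinal :=
  ⨅ X : {X : Set R // IsDomSet R X}, Cardinal.mk X.1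

/-- The total domination number γ_t(Γ(R)), as a cardinal. -/
noncomputable def totDomNum (R : Type*) [CommRing R] : Cardinal :=
  ⨅ X : {X : Set R // IsTotDomSet R X}, Cardinal.mk X.1

/-- The zero-divisor graph as a simple graph (loops discarded), used for girth. -/
def zdGraph (R : Type*) [CommRing R] : SimpleGraph R where
  Adj r s := r ≠ s ∧ r ≠ 0 ∧ s ≠ 0 ∧ r * s = 0
  symm := by constructor; intro r s h; exact ⟨h.1.symm, h.2.2.1, h.2.1, by rw [mul_comm]; exact h.2.2.2⟩
  loopless := by constructor; intro r h; exact h.1 rfl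

/-!
Take a minimum dominating set `D`. If some `a ∈ D` has no neighbour in `D`, try to swap `a` for a
neighbour `b` of `a` that takes over the vertices `a` was dominating and has a neighbour in the
new set: `b = c * a` works when `c * a ^ 2 = 0 ≠ c * a` (then `b ^ 2 = 0`), and any neighbour of
`a` works when `a` has no private neighbour. Each swap reduces the number of vertices of `D`
without a neighbour in `D`, and when none is left `D` is total dominating.

In the remaining case `a` has a private neighbour `p` and `ann(a ^ 2) = ann(a)`. The latter puts
`a ^ 2` in `D`, and as `a ^ 2 * p = 0`, privacy of `p` forces `a ^ 2 = a`. Then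
`R ≅ aR × (1 - a)R`, and `D` must contain `a` together with a copy of each nonzero zero-divisor
of either factor; the union of these zero-divisor sets (an idempotent replacing an empty one) is
total dominating, and both being empty would give `γ_t ≤ 2`.
-/

open Cardinal

section ZeroDivisorGraph

variable {R : Type*} [CommRing R]

lemma isTotDomSet_zdVerts : IsTotDomSet R (zdVerts R) :=
  ⟨subset_rfl, fun _ ⟨hv, y, hy, hvy⟩ =>
    ⟨y, ⟨hy, _, hv, by rw [mul_comm, hvy]⟩, by rw [mul_comm, hvy]⟩⟩

lemma IsTotDomSet.isDomSet {X : Set R} (h : IsTotDomSet R X) : IsDomSet R X :=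
  ⟨h.1, fun v hv _ => h.2 v hv⟩

lemma totDomNum_le_mk {X : Set R} (h : IsTotDomSet R X) : totDomNum R ≤ #X :=
  ciInf_le (OrderBot.bddBelow _) (⟨X, h⟩ : {X : Set R // IsTotDomSet R X})

lemma domNum_le_totDomNum : domNum R ≤ totDomNum R :=
  have : Nonempty {X : Set R // IsTotDomSet R X} := ⟨⟨_, isTotDomSet_zdVerts⟩⟩
  le_ciInf fun X =>
    ciInf_le (OrderBot.bddBelow _) (⟨X.1, X.2.isDomSet⟩ : {X : Set R // IsDomSet R X})

lemma exists_isDomSet_mk_eq_domNum : ∃ D : Set R, IsDomSet R D ∧ #D = domNum R :=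
  have : Nonempty {X : Set R // IsDomSet R X} := ⟨⟨_, isTotDomSet_zdVerts.isDomSet⟩⟩
  let ⟨⟨D, hD⟩, hDeq⟩ := ciInf_mem fun X : {X : Set R // IsDomSet R X} => #X.1
  ⟨D, hD, hDeq⟩

def isolatedVerts (D : Set R) : Set R :=
  {x ∈ D | ∀ y ∈ D, y * x ≠ 0}

lemma IsDomSet.isTotDomSet_of_isolatedVerts_eq_empty {D : Set R} (hD : IsDomSet R D)
    (h : isolatedVerts D = ∅) : IsTotDomSet R D := by
  refine ⟨hD.1, fun v hv => ?_⟩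
  by_cases hvD : v ∈ D
  · by_contra! hv'
    exact h.subset ⟨hvD, hv'⟩
  · exact hD.2 v hv hvD

section Exchange

variable {D : Set R} {a b : R}

lemma notMem_of_mul_mem_isolatedVerts (ha : a ∈ isolatedVerts D) (hba : b * a = 0) : b ∉ D :=
  fun hb => ha.2 b hb hba

lemma IsDomSet.exchange (hD : IsDomSet R D) (ha : a ∈ isolatedVerts D) (hb : b ≠ 0)
    (hba : b * a = 0) (hcov : ∀ v ≠ 0, v * a = 0 → ∃ x ∈ insert b (D \ {a}), x * v = 0) :
    IsDomSet R (insert b (D \ {a})) := by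
  refine ⟨Set.insert_subset ⟨hb, a, (hD.1 ha.1).1, hba⟩ fun x hx => hD.1 hx.1, fun v hv hvD => ?_⟩
  by_cases hva : v = a
  · exact ⟨b, Set.mem_insert b _, hva ▸ hba⟩
  have hvD' : v ∉ D := fun h => hvD (Set.mem_insert_of_mem _ ⟨h, hva⟩)
  obtain ⟨x, hxD, hxv⟩ := hD.2 v hv hvD'
  by_cases hxa : x = a
  · exact hcov v hv.1 (by rw [mul_comm, ← hxa, hxv])
  · exact ⟨x, Set.mem_insert_of_mem _ ⟨hxD, hxa⟩, hxv⟩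

lemma isolatedVerts_exchange_subset (ha : a ∈ isolatedVerts D) (hb : b ≠ 0) (hba : b * a = 0)
    (hcov : ∀ v ≠ 0, v * a = 0 → ∃ x ∈ insert b (D \ {a}), x * v = 0) :
    isolatedVerts (insert b (D \ {a})) ⊆ isolatedVerts D \ {a} := by
  rintro x ⟨hxD', hx⟩
  rcases hxD' with rfl | ⟨hxD, hxa⟩
  · obtain ⟨y, hy, hyx⟩ := hcov x hb hba
    exact absurd hyx (hx y hy)
  refine ⟨⟨hxD, fun y hy hyx => ?_⟩, hxa⟩
  by_cases hya : y = a
  · exact ha.2 x hxD (by rw [mul_comm, ← hya, hyx])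
  · exact hx y (Set.mem_insert_of_mem _ ⟨hy, hya⟩) hyx

lemma mk_exchange_of_mem_isolatedVerts (ha : a ∈ isolatedVerts D) (hba : b * a = 0)
    (hD : D.Finite) :
    #(insert b (D \ {a}) : Set R) = #D := by
  rw [← Set.cast_ncard (hD.sdiff.insert b), ← Set.cast_ncard hD,
    Set.ncard_exchange (notMem_of_mul_mem_isolatedVerts ha hba) ha.1]

end Exchange

lemma IsIdempotentElem.mul_eq_zero_of_add_eq_one {e f : R} (he : IsIdempotentElem e)
    (hef : e + f = 1) : e * f = 0 := by
  rw [eq_sub_of_add_eq' hef]; exact he.mul_one_sub_self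

lemma IsIdempotentElem.of_add_eq_one {e f : R} (he : IsIdempotentElem e) (hef : e + f = 1) :
    IsIdempotentElem f := by
  rw [eq_sub_of_add_eq' hef]; exact he.one_sub

/-- The vertex set of `Γ(eR)`, as a subset of `R`. -/
def cornerZdVerts (e : R) : Set R :=
  {u | u ≠ 0 ∧ u * e = u ∧ ∃ y ≠ 0, y * e = y ∧ u * y = 0}

section Corner

variable {e f : R}

lemma self_notMem_cornerZdVerts (e : R) : e ∉ cornerZdVerts e :=
  fun ⟨_, _, y, hy, hye, hey⟩ => hy (by rw [← hye, mul_comm, hey])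

lemma mul_mem_cornerZdVerts (he : IsIdempotentElem e) {v z : R} (hvz : v * z = 0)
    (hv : e * v ≠ 0) (hz : e * z ≠ 0) : e * z ∈ cornerZdVerts e :=
  ⟨hz, by rw [mul_right_comm, he.eq], e * v, hv, by rw [mul_right_comm, he.eq],
    by linear_combination (e * e) * hvz⟩

lemma isTotDomSet_union_of_cornerZdVerts_subset (he : IsIdempotentElem e) (hef : e + f = 1)
    {T₁ T₂ : Set R} (hT₁ : T₁ ⊆ {t | t ≠ 0 ∧ t * e = t}) (hT₂ : T₂ ⊆ {t | t ≠ 0 ∧ t * f = t})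
    (h₁ : T₁.Nonempty) (h₂ : T₂.Nonempty) (hZ₁ : cornerZdVerts e ⊆ T₁)
    (hZ₂ : cornerZdVerts f ⊆ T₂) : IsTotDomSet R (T₁ ∪ T₂) := by
  have hef0 := he.mul_eq_zero_of_add_eq_one hef
  have hf := he.of_add_eq_one hef
  obtain ⟨t₁, ht₁⟩ := h₁
  obtain ⟨t₂, ht₂⟩ := h₂
  refine ⟨Set.union_subset (fun t ht => ⟨(hT₁ ht).1, t₂, (hT₂ ht₂).1, ?_⟩)
    (fun t ht => ⟨(hT₂ ht).1, t₁, (hT₁ ht₁).1, ?_⟩), ?_⟩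
  · linear_combination (t * t₂) * hef0 - t₂ * (hT₁ ht).2 - (t * e) * (hT₂ ht₂).2
  · linear_combination (t * t₁) * hef0 - t₁ * (hT₂ ht).2 - (t * f) * (hT₁ ht₁).2
  rintro v ⟨-, z, hz, hvz⟩
  by_cases hev : e * v = 0
  · exact ⟨t₁, Or.inl ht₁, by linear_combination t₁ * hev - v * (hT₁ ht₁).2⟩
  by_cases hfv : f * v = 0
  · exact ⟨t₂, Or.inr ht₂, by linear_combination t₂ * hfv - v * (hT₂ ht₂).2⟩
  by_cases hez : e * z = 0
  · have hfz : f * z ≠ 0 := fun h => hz (by linear_combination -z * hef + hez + h)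
    exact ⟨f * z, Or.inr (hZ₂ (mul_mem_cornerZdVerts hf hvz hfv hfz)),
      by linear_combination f * hvz⟩
  · exact ⟨e * z, Or.inl (hZ₁ (mul_mem_cornerZdVerts he hvz hev hez)),
      by linear_combination e * hvz⟩

lemma add_mem_of_mem_cornerZdVerts {D : Set R} (hD : IsDomSet R D) (he : IsIdempotentElem e)
    (hef : e + f = 1) {u : R} (hu : u ∈ cornerZdVerts e)
    (hD' : ∀ x ∈ D, x * f = 0 → x * u ≠ 0) : u + f ∈ D := by
  obtain ⟨hu0, hue, y, hy0, hye, huy⟩ := hu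
  have hef0 := he.mul_eq_zero_of_add_eq_one hef
  have hfe : f * e = 0 := by rw [mul_comm, hef0]
  have huf : u * f = 0 := by linear_combination -f * hue + u * hef0
  by_contra hmem
  have hne : u + f ≠ 0 := fun h => hu0 (by linear_combination e * h - hue - hef0)
  obtain ⟨x, hxD, hx⟩ :=
    hD.2 _ ⟨hne, y, hy0, by linear_combination huy + y * hfe - f * hye⟩ hmem
  refine hD' x hxD ?_ (by linear_combination e * hx - x * hue - x * hfe)
  linear_combination f * hx - x * (he.of_add_eq_one hef).eq - x * huf

lemma IsIdempotentElem.eq_of_add_eq_add (he : IsIdempotentElem e) (hef : e + f = 1) {u w : R}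
    (hu : u * e = u) (hw : w * f = w) (h : u + f = w + e) : u = e := by
  have hef0 := he.mul_eq_zero_of_add_eq_one hef
  linear_combination e * h - hu + he.eq + (w - 1) * hef0 - e * hw

lemma mk_cornerZdVerts_add_mk_cornerZdVerts_add_one_le {D : Set R} (hD : IsDomSet R D)
    (he : IsIdempotentElem e) (hef : e + f = 1) (heD : e ∈ isolatedVerts D)
    (hD' : ∀ x ∈ D, x ≠ e → x * f ≠ 0) :
    #(cornerZdVerts e) + #(cornerZdVerts f) + 1 ≤ #D := by
  have hfe : f + e = 1 := by rw [add_comm, hef]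
  have hf := he.of_add_eq_one hef
  set S₁ := (· + f) '' cornerZdVerts e
  set S₂ := (· + e) '' cornerZdVerts f
  have hS₁ : S₁ ⊆ D := by
    rintro _ ⟨u, hu, rfl⟩
    refine add_mem_of_mem_cornerZdVerts hD he hef hu fun x hx hxf hxu => ?_
    obtain rfl : x = e := by_contra fun h => hD' x hx h hxf
    exact hu.1 (by rw [← hu.2.1, mul_comm, hxu])
  have hS₂ : S₂ ⊆ D := by
    rintro _ ⟨w, hw, rfl⟩
    exact add_mem_of_mem_cornerZdVerts hD hf hfe hw fun x hx hxe _ => heD.2 x hx hxe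
  have hdisj : Disjoint S₁ S₂ := by
    rw [Set.disjoint_left]
    rintro _ ⟨u, hu, rfl⟩ ⟨w, hw, h⟩
    obtain rfl := he.eq_of_add_eq_add hef hu.2.1 hw.2.1 h.symm
    exact self_notMem_cornerZdVerts u hu
  have he_not_mem : e ∉ S₁ ∪ S₂ := by
    rintro (⟨u, hu, h⟩ | ⟨w, hw, h⟩)
    · obtain rfl := he.eq_of_add_eq_add hef hu.2.1 (zero_mul f) (h.trans (zero_add e).symm)
      exact self_notMem_cornerZdVerts u hu
    · exact hw.1 (add_eq_right.mp h)
  calc #(cornerZdVerts e) + #(cornerZdVerts f) + 1 = #(insert e (S₁ ∪ S₂) : Set R) := by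
        rw [Cardinal.mk_insert he_not_mem, Cardinal.mk_union_of_disjoint hdisj,
          Cardinal.mk_image_eq (add_left_injective f), Cardinal.mk_image_eq (add_left_injective e)]
    _ ≤ #D := Cardinal.mk_le_mk_of_subset (Set.insert_subset heD.1 (Set.union_subset hS₁ hS₂))

lemma totDomNum_le_mk_cornerZdVerts_add_mk_cornerZdVerts_add_one (h2 : 2 < totDomNum R)
    (he : IsIdempotentElem e) (hef : e + f = 1) (he0 : e ≠ 0) (hf0 : f ≠ 0) :
    totDomNum R ≤ #(cornerZdVerts e) + #(cornerZdVerts f) + 1 := by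
  have hZ {g : R} : cornerZdVerts g ⊆ {t | t ≠ 0 ∧ t * g = t} := fun _ hu => ⟨hu.1, hu.2.1⟩
  have hself {g : R} (hg : IsIdempotentElem g) (hg0 : g ≠ 0) : {g} ⊆ {t | t ≠ 0 ∧ t * g = t} :=
    Set.singleton_subset_iff.mpr ⟨hg0, hg.eq⟩
  have hf := he.of_add_eq_one hef
  have key {T₁ T₂ : Set R} (hT₁ : T₁ ⊆ {t | t ≠ 0 ∧ t * e = t})
      (hT₂ : T₂ ⊆ {t | t ≠ 0 ∧ t * f = t}) (h₁ : T₁.Nonempty) (h₂ : T₂.Nonempty)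
      (hZ₁ : cornerZdVerts e ⊆ T₁) (hZ₂ : cornerZdVerts f ⊆ T₂) : totDomNum R ≤ #T₁ + #T₂ :=
    (totDomNum_le_mk (isTotDomSet_union_of_cornerZdVerts_subset he hef hT₁ hT₂ h₁ h₂ hZ₁ hZ₂)).trans
      (Cardinal.mk_union_le T₁ T₂)
  rcases (cornerZdVerts e).eq_empty_or_nonempty with h₁ | h₁ <;>
    rcases (cornerZdVerts f).eq_empty_or_nonempty with h₂ | h₂
  · have := key (hself he he0) (hself hf hf0) (Set.singleton_nonempty e)
      (Set.singleton_nonempty f) (h₁ ▸ Set.empty_subset _) (h₂ ▸ Set.empty_subset _)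
    rw [Cardinal.mk_singleton, Cardinal.mk_singleton, one_add_one_eq_two] at this
    exact absurd this (not_le.mpr h2)
  · have := key (hself he he0) hZ (Set.singleton_nonempty e) h₂ (h₁ ▸ Set.empty_subset _) subset_rfl
    simpa [h₁, add_comm] using this
  · have := key hZ (hself hf hf0) h₁ (Set.singleton_nonempty f) subset_rfl (h₂ ▸ Set.empty_subset _)
    simpa [h₂] using this
  · exact (key hZ hZ h₁ h₂ subset_rfl subset_rfl).trans le_self_add

end Corner

section PrivateNeighbor

variable {D : Set R} {a p : R}

lemma isIdempotentElem_of_mem_isolatedVerts (hD : IsDomSet R D) (ha : a ∈ isolatedVerts D)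
    (hann : ∀ c, c * (a * a) = 0 → c * a = 0) (hpa : p * a = 0)
    (hpriv : ∀ x ∈ D, x ≠ a → x * p ≠ 0) : IsIdempotentElem a := by
  obtain ⟨-, y, hy, hay⟩ := hD.1 ha.1
  have ha2 : a * a ∈ D := by
    by_contra h
    obtain ⟨x, hx, hxa⟩ := hD.2 (a * a) ⟨ha.2 a ha.1, y, hy, by rw [mul_assoc, hay, mul_zero]⟩ h
    exact ha.2 x hx (hann x hxa)
  by_contra h
  exact hpriv _ ha2 h (by linear_combination a * hpa)

lemma totDomNum_le_mk_of_isIdempotentElem (h2 : 2 < totDomNum R) (hD : IsDomSet R D)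
    (ha : a ∈ isolatedVerts D) (he : IsIdempotentElem a) (hp : p ≠ 0) (hpa : p * a = 0)
    (hpriv : ∀ x ∈ D, x ≠ a → x * p ≠ 0) : totDomNum R ≤ #D := by
  have hef : a + (1 - a) = 1 := add_sub_cancel a 1
  have hpf : p * (1 - a) = p := by linear_combination -hpa
  calc totDomNum R ≤ #(cornerZdVerts a) + #(cornerZdVerts (1 - a)) + 1 :=
        totDomNum_le_mk_cornerZdVerts_add_mk_cornerZdVerts_add_one h2 he hef (hD.1 ha.1).1
          fun h => hp (by rw [← hpf, h, mul_zero])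
    _ ≤ #D := mk_cornerZdVerts_add_mk_cornerZdVerts_add_one_le hD he hef ha
          fun x hx hxa hxf => hpriv x hx hxa (by linear_combination p * hxf - x * hpf)

end PrivateNeighbor

lemma exists_exchange_or_totDomNum_le (h2 : 2 < totDomNum R) {D : Set R} (hD : IsDomSet R D)
    {a : R} (ha : a ∈ isolatedVerts D) :
    totDomNum R ≤ #D ∨
      ∃ b ≠ 0, b * a = 0 ∧ ∀ v ≠ 0, v * a = 0 → ∃ x ∈ insert b (D \ {a}), x * v = 0 := by
  by_cases hc : ∃ c, c * (a * a) = 0 ∧ c * a ≠ 0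
  · obtain ⟨c, hc, hca⟩ := hc
    exact Or.inr ⟨c * a, hca, by linear_combination hc,
      fun v _ hva => ⟨c * a, Set.mem_insert _ _, by linear_combination c * hva⟩⟩
  push Not at hc
  by_cases hp : ∃ p ≠ 0, p * a = 0 ∧ ∀ x ∈ D, x ≠ a → x * p ≠ 0
  · obtain ⟨p, hp, hpa, hpriv⟩ := hp
    exact Or.inl (totDomNum_le_mk_of_isIdempotentElem h2 hD ha
      (isIdempotentElem_of_mem_isolatedVerts hD ha hc hpa hpriv) hp hpa hpriv)
  push Not at hp
  obtain ⟨-, y, hy, hay⟩ := hD.1 ha.1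
  refine Or.inr ⟨y, hy, by rw [mul_comm, hay], fun v hv hva => ?_⟩
  obtain ⟨x, hx, hxa, hxv⟩ := hp v hv hva
  exact ⟨x, Set.mem_insert_of_mem _ ⟨hx, hxa⟩, hxv⟩

lemma totDomNum_le_mk_of_isDomSet (h2 : 2 < totDomNum R) {D : Set R} (hD : IsDomSet R D)
    (hfin : D.Finite) : totDomNum R ≤ #D := by
  induction hn : (isolatedVerts D).ncard using Nat.strong_induction_on generalizing D with
  | _ n ih =>
  rcases (isolatedVerts D).eq_empty_or_nonempty with h | ⟨a, ha⟩
  · exact totDomNum_le_mk (hD.isTotDomSet_of_isolatedVerts_eq_empty h)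
  obtain h | ⟨b, hb, hba, hcov⟩ := exists_exchange_or_totDomNum_le h2 hD ha
  · exact h
  rw [← mk_exchange_of_mem_isolatedVerts ha hba hfin]
  refine ih _ ?_ (hD.exchange ha hb hba hcov) (hfin.sdiff.insert b) rfl
  rw [← hn]
  exact Set.ncard_lt_ncard ((isolatedVerts_exchange_subset ha hb hba hcov).trans_ssubset
    (Set.sdiff_singleton_ssubset.mpr ha)) (hfin.subset (Set.sep_subset _ _))

end ZeroDivisorGraph

theorem stmt_16 (R : Type*) [CommRing R]
    (h4 : 4 ≤ totDomNum R) (hfin : totDomNum R < Cardinal.aleph0) :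
    domNum R = totDomNum R := by
  obtain ⟨D, hD, hDeq⟩ := exists_isDomSet_mk_eq_domNum (R := R)
  have hDfin : D.Finite :=
    Cardinal.lt_aleph0_iff_set_finite.mp (hDeq ▸ domNum_le_totDomNum.trans_lt hfin)
  have h2 : 2 < totDomNum R := lt_of_lt_of_le (by norm_num) h4
  refine le_antisymm domNum_le_totDomNum ?_
  rw [← hDeq]
  exact totDomNum_le_mk_of_isDomSet h2 hD hDfin
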